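/- For simplicial groups G and H, the shuffle map interacts with the cone operators by ∇_{EG,EH}(S_G ⊗ S_H) = S_{G×H} ∘ ∇_{EG,EH} ∘ (1⊗S_H − S_G⊗1) on C(EG) ⊗ C(EH), where S denotes the rescaled contracting homotopy on C(E−) and E(G×H) = EG × EH. -/

import Mathlib

/-!
STATEMENT 16.  For simplicial groups `G`, `H` the shuffle map interacts with
the cone operators by
`∇_{EG,EH} ∘ (S_G ⊗ S_H) = S_{G×H} ∘ ∇_{EG,EH} ∘ (1 ⊗ S_H - S_G ⊗ 1)`
on (normalised) `C(EG) ⊗ C(EH)`, where `E(G×H) = EG × EH` and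
`S_{G×H} = S_G × S_H` componentwise.

Koszul signs of the odd operators (`S_H` in `S_G ⊗ S_H` and in `1 ⊗ S_H`) are
implemented by the parity operator `parOp`; the identity is stated modulo the
degenerate chains of `EG × EH` (i.e. in the normalised complex).
-/

open TensorProduct

noncomputable section

/-- A simplicial set, encoded with ℕ-indexed face maps `d i : X_{n+1} → X_n`
and degeneracy maps `s i : X_n → X_{n+1}` (only indices in the valid range
are constrained, by the usual simplicial identities). -/
structure SST : Type 1 where
  X : ℕ → Type
  d : ℕ → {n : ℕ} → X (n+1) → X n
  s : ℕ → {n : ℕ} → X n → X (n+1)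
  h_dd : ∀ {n : ℕ} (i j : ℕ), i < j → j ≤ n + 2 → ∀ x : X (n+2),
    d i (d j x) = d (j-1) (d i x)
  h_ds_lt : ∀ {n : ℕ} (i j : ℕ), i < j → j ≤ n + 1 → ∀ x : X (n+1),
    d i (s j x) = s (j-1) (d i x)
  h_ds_eq : ∀ {n : ℕ} (j : ℕ), j ≤ n → ∀ x : X n, d j (s j x) = x
  h_ds_succ : ∀ {n : ℕ} (j : ℕ), j ≤ n → ∀ x : X n, d (j+1) (s j x) = x
  h_ds_gt : ∀ {n : ℕ} (i j : ℕ), j + 1 < i → i ≤ n + 2 → ∀ x : X (n+1),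
    d i (s j x) = s j (d (i-1) x)
  h_ss : ∀ {n : ℕ} (i j : ℕ), i ≤ j → j ≤ n → ∀ x : X n,
    s i (s j x) = s (j+1) (s i x)

namespace SST

/-- Product of simplicial sets. -/
def prod (S T : SST) : SST where
  X n := S.X n × T.X n
  d := fun i {n} x => (S.d i x.1, T.d i x.2)
  s := fun i {n} x => (S.s i x.1, T.s i x.2)
  h_dd := fun i j h1 h2 x => Prod.ext (S.h_dd i j h1 h2 x.1) (T.h_dd i j h1 h2 x.2)
  h_ds_lt := fun i j h1 h2 x => Prod.ext (S.h_ds_lt i j h1 h2 x.1) (T.h_ds_lt i j h1 h2 x.2)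
  h_ds_eq := fun j h x => Prod.ext (S.h_ds_eq j h x.1) (T.h_ds_eq j h x.2)
  h_ds_succ := fun j h x => Prod.ext (S.h_ds_succ j h x.1) (T.h_ds_succ j h x.2)
  h_ds_gt := fun i j h1 h2 x => Prod.ext (S.h_ds_gt i j h1 h2 x.1) (T.h_ds_gt i j h1 h2 x.2)
  h_ss := fun i j h1 h2 x => Prod.ext (S.h_ss i j h1 h2 x.1) (T.h_ss i j h1 h2 x.2)

/-- The set of all simplices of `S`. -/
abbrev Tot (S : SST) : Type := Σ n : ℕ, S.X n

/-- Degree cast. -/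
def castX (S : SST) {a b : ℕ} (h : a = b) (x : S.X a) : S.X b := h ▸ x

/-- Iterated last face map `(∂̃)^k : X_{n+k} → X_n`. -/
def dTop (S : SST) : (k : ℕ) → {n : ℕ} → S.X (n + k) → S.X n
  | 0, _, x => x
  | (k+1), n, x => S.dTop k (S.d (n + k + 1) x)

/-- Iterated zeroth face map `(∂_0)^k : X_{n+k} → X_n`. -/
def d0 (S : SST) : (k : ℕ) → {n : ℕ} → S.X (n + k) → S.X n
  | 0, _, x => x
  | (k+1), _, x => S.d0 k (S.d 0 x)

/-- `∂_a^{a+k-1} = ∂_a ∘ ∂_{a+1} ∘ ⋯ ∘ ∂_{a+k-1} : X_{n+k} → X_n`. -/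
def dMid (S : SST) (a : ℕ) : (k : ℕ) → {n : ℕ} → S.X (n + k) → S.X n
  | 0, _, x => x
  | (k+1), n, x => S.dMid a k (S.d (a + k) x)

/-- Iterated degeneracies `s_{i_q} ∘ ⋯ ∘ s_{i_1}` for a descending list. -/
def sIter (S : SST) : (l : List ℕ) → {n : ℕ} → S.X n → S.X (n + l.length)
  | [], _, x => x
  | (i :: t), _, x => S.s i (S.sIter t x)

/-- `s_ν : X_n → X_{n + |ν|}` for a finite set `ν ⊆ ℕ` of degeneracy indices
(applied in the usual order `s_ν = s_{ν_q} ∘ ⋯ ∘ s_{ν_1}`, `ν_1 < ⋯ < ν_q`). -/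
def sSet (S : SST) (ν : Finset ℕ) {n : ℕ} (x : S.X n) : S.X (n + ν.card) :=
  S.castX (by simp) (S.sIter ((ν.sort (· ≤ ·)).reverse) x)

end SST

variable (R : Type) [CommRing R]

/-- The (unnormalised) chain module on a simplicial set. -/
abbrev Ch (S : SST) : Type := S.Tot →₀ R

/-- The generator corresponding to a simplex. -/
def gsing (S : SST) {n : ℕ} (x : S.X n) : Ch R S := Finsupp.single ⟨n, x⟩ 1

/-- The submodule of degenerate chains (whose quotient is the normalised
chain complex). -/
def DegSub (S : SST) : Submodule R (Ch R S) :=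
  Submodule.span R {c | ∃ (n j : ℕ) (x : S.X n), j ≤ n ∧ c = gsing R S (S.s j x)}

/-- The simplicial boundary `∂ = Σ (-1)^k ∂_k`. -/
def bd (S : SST) : Ch R S →ₗ[R] Ch R S :=
  (Finsupp.lift (Ch R S) R S.Tot) fun z =>
    match z with
    | ⟨0, _⟩ => 0
    | ⟨n+1, x⟩ => ∑ k ∈ Finset.range (n+2), ((-1 : R)^k) • gsing R S (S.d k x)

/-- The parity operator `(-1)^deg` on chains. -/
def parOp (S : SST) : Ch R S →ₗ[R] Ch R S :=
  (Finsupp.lift (Ch R S) R S.Tot) fun z => ((-1 : R)^z.1) • Finsupp.single z 1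

/-- The span of the simplices of degree `n`. -/
def GrSub (S : SST) (n : ℕ) : Submodule R (Ch R S) :=
  Submodule.span R {c | ∃ x : S.X n, c = gsing R S x}

/-- The sign `sgn(μ, ν)` of a shuffle given by a partition `(μ, ν)`. -/
def shSign (μ ν : Finset ℕ) : ℤ := (-1) ^ (∑ a ∈ μ, (ν.filter (fun b => b < a)).card)

/-- The Eilenberg–Mac Lane shuffle map on a pair of simplices:
`∇(x ⊗ y) = Σ_{(μ,ν)⊢(m,n)} sgn(μ,ν) (s_ν x, s_μ y)`. -/
def shufAux (S T : SST) (p : S.Tot) (q : T.Tot) : Ch R (S.prod T) :=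
  ∑ ν ∈ (Finset.range (p.1 + q.1)).powerset,
    if h : ν ⊆ Finset.range (p.1 + q.1) ∧ ν.card = q.1 then
      ((shSign ((Finset.range (p.1 + q.1)) \ ν) ν : ℤ) : R) •
        Finsupp.single
          ⟨p.1 + q.1,
            (S.castX (by rw [h.2]) (S.sSet ν p.2),
             T.castX (by rw [Finset.card_sdiff, Finset.inter_eq_left.mpr h.1, Finset.card_range, h.2]; omega)
               (T.sSet ((Finset.range (p.1 + q.1)) \ ν) q.2))⟩ 1
    else 0

/-- The shuffle map as a bilinear map. -/
def shuf (S T : SST) : Ch R S →ₗ[R] Ch R T →ₗ[R] Ch R (S.prod T) :=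
  (Finsupp.lift (Ch R T →ₗ[R] Ch R (S.prod T)) R S.Tot) fun p =>
    (Finsupp.lift (Ch R (S.prod T)) R T.Tot) fun q => shufAux R S T p q

/-- The shuffle map `∇ : C(X) ⊗ C(Y) → C(X × Y)`. -/
def shufT (S T : SST) : Ch R S ⊗[R] Ch R T →ₗ[R] Ch R (S.prod T) :=
  TensorProduct.lift (shuf R S T)

/-- The Alexander–Whitney map
`AW(x, y) = Σ_i (∂̃)^{n-i} x ⊗ (∂_0)^i y : C(X × Y) → C(X) ⊗ C(Y)`. -/
def AWmap (S T : SST) : Ch R (S.prod T) →ₗ[R] Ch R S ⊗[R] Ch R T :=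
  (Finsupp.lift (Ch R S ⊗[R] Ch R T) R (S.prod T).Tot) fun p =>
    ∑ i ∈ (Finset.range (p.1 + 1)).attach,
      (Finsupp.single
          (⟨i.1, S.dTop (p.1 - i.1)
            (S.castX (by have := Finset.mem_range.mp i.2; omega) p.2.1)⟩ : S.Tot) (1 : R))
        ⊗ₜ[R]
      (Finsupp.single
          (⟨p.1 - i.1, T.d0 i.1
            (T.castX (by have := Finset.mem_range.mp i.2; omega) p.2.2)⟩ : T.Tot) (1 : R))

/-- The chain map induced by the swap `τ : X × Y → Y × X`. -/
def swapMap (S T : SST) : Ch R (S.prod T) →ₗ[R] Ch R (T.prod S) :=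
  (Finsupp.lift (Ch R (T.prod S)) R (S.prod T).Tot) fun p =>
    Finsupp.single ⟨p.1, (p.2.2, p.2.1)⟩ 1

/-- The graded transposition `T(a ⊗ b) = (-1)^{|a||b|} b ⊗ a`. -/
def twistMap (S T : SST) : Ch R S ⊗[R] Ch R T →ₗ[R] Ch R T ⊗[R] Ch R S :=
  TensorProduct.lift <|
    (Finsupp.lift (Ch R T →ₗ[R] Ch R T ⊗[R] Ch R S) R S.Tot) fun p =>
      (Finsupp.lift (Ch R T ⊗[R] Ch R S) R T.Tot) fun q =>
        ((-1 : R) ^ (p.1 * q.1)) • (Finsupp.single q 1 ⊗ₜ[R] Finsupp.single p 1)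

/-- The chain map induced by the diagonal. -/
def diagMap (S : SST) : Ch R S →ₗ[R] Ch R (S.prod S) :=
  (Finsupp.lift (Ch R (S.prod S)) R S.Tot) fun p => Finsupp.single ⟨p.1, (p.2, p.2)⟩ 1

/-- A simplex is nondegenerate if it is not of the form `s_j y`. -/
def NondegT (S : SST) : S.Tot → Prop
  | ⟨0, _⟩ => True
  | ⟨n+1, x⟩ => ∀ j ≤ n, ∀ y : S.X n, x ≠ S.s j y


/-- The combinatorial structure of the universal bundle `EG` of a simplicial
group `G`: a basepoint `e₀ ∈ EG_0` and the shifted last degeneracy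
`S̃ : EG_n → EG_{n+1}`, with its structural identities. -/
structure ConeData (E : SST) where
  e0 : E.X 0
  St : ∀ {n : ℕ}, E.X n → E.X (n+1)
  hd_mid : ∀ {n : ℕ} (i : ℕ), i ≤ n + 1 → ∀ e : E.X (n+1),
    E.d i (St e) = St (E.d i e)
  hd_zero : ∀ e : E.X 0, E.d 0 (St e) = e0
  hd_top : ∀ {n : ℕ} (e : E.X n), E.d (n+1) (St e) = e
  hs_mid : ∀ {n : ℕ} (i : ℕ), i ≤ n → ∀ e : E.X n, E.s i (St e) = St (E.s i e)
  hs_top : ∀ {n : ℕ} (e : E.X n), E.s (n+1) (St e) = St (St e)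
  hSe0 : St e0 = E.s 0 e0

/-- The rescaled operator `S(e) = -(-1)^{|e|} S̃(e)` on chains. -/
def Sop (E : SST) (CD : ConeData E) : Ch R E →ₗ[R] Ch R E :=
  (Finsupp.lift (Ch R E) R E.Tot) fun z =>
    (-(-1 : R) ^ z.1) • gsing R E (CD.St z.2)

/-- The componentwise cone structure on `E(G×H) = EG × EH`. -/
def ConeData.prod {E F : SST} (CE : ConeData E) (CF : ConeData F) :
    Ch R (E.prod F) →ₗ[R] Ch R (E.prod F) :=
  (Finsupp.lift (Ch R (E.prod F)) R (E.prod F).Tot) fun z =>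
    (-(-1 : R) ^ z.1) •
      (Finsupp.single (⟨z.1 + 1, (CE.St z.2.1, CF.St z.2.2)⟩ : (E.prod F).Tot) 1)


/-
Write `N = m + n + 1` for the top index of an `(m + 1, n + 1)`-shuffle `(μ, ν)` of `S̃x ⊗ S̃y`,
`x ∈ EG_m`, `y ∈ EH_n`. Commuting degeneracies past `S̃` by `s_i S̃ = S̃ s_i` (`i ≤ deg`) and
`s_top S̃ = S̃ S̃`, the simplex `(s_ν S̃x, s_μ S̃y)` is `S̃ × S̃` applied to
* the `(μ \ {N}, ν)`-term of `∇(x ⊗ S̃y)` if `N ∈ μ`, the shuffle sign changing by `(-1)^|ν|`;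
* the `(μ, ν \ {N})`-term of `∇(S̃x ⊗ y)` if `N ∈ ν`, with the same shuffle sign.
With the signs of `S`, the terms of the two sides then cancel in pairs, generator by generator.
-/

open Finset

theorem Finset.sort_insert_of_forall_lt {α : Type*} [LinearOrder α] {a : α} {s : Finset α}
    (h : ∀ b ∈ s, b < a) : (insert a s).sort (· ≤ ·) = s.sort (· ≤ ·) ++ [a] := by
  have ha : a ∉ s := fun ha => lt_irrefl a (h a ha)
  refine List.Perm.eq_of_pairwise' (pairwise_sort _ _) ?_ ?_
  · refine List.pairwise_append.2 ⟨pairwise_sort _ _, List.pairwise_singleton _ a, ?_⟩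
    rintro b hb c hc
    rw [List.mem_singleton.1 hc]
    exact (h b ((mem_sort _).1 hb)).le
  · exact (sort_perm_toList _ _).trans ((toList_insert ha).trans
      (((sort_perm_toList _ _).symm.cons a).trans (List.perm_append_singleton a _).symm))

theorem Finset.sum_powersetCard_succ_insert {α β : Type*} [DecidableEq α] [AddCommMonoid β]
    {a : α} {s : Finset α} (ha : a ∉ s) (k : ℕ) (f : Finset α → β) :
    ∑ ν ∈ powersetCard (k + 1) (insert a s), f ν
      = ∑ ν ∈ powersetCard (k + 1) s, f ν + ∑ ν ∈ powersetCard k s, f (insert a ν) := by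
  have hnotMem : ∀ ν ∈ powersetCard k s, a ∉ ν := fun ν hν =>
    notMem_mono (mem_powersetCard.1 hν).1 ha
  rw [powersetCard_succ_insert ha, sum_union, sum_image]
  · intro μ hμ μ' hμ' h
    rw [← erase_insert (hnotMem μ hμ), h, erase_insert (hnotMem μ' hμ')]
  · refine disjoint_left.2 fun ν hν hν' => ?_
    obtain ⟨μ, -, rfl⟩ := mem_image.1 hν'
    exact ha ((mem_powersetCard.1 hν).1 (mem_insert_self a μ))

theorem Finset.range_add_one_sdiff {N : ℕ} {ν : Finset ℕ} (hν : ν ⊆ range N) :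
    range (N + 1) \ ν = insert N (range N \ ν) :=
  range_add_one ▸ insert_sdiff_of_notMem _ fun hN => notMem_range_self (hν hN)

theorem Finset.range_add_one_sdiff_insert (N : ℕ) (ν : Finset ℕ) :
    range (N + 1) \ insert N ν = range N \ ν := by
  rw [range_add_one, insert_sdiff_insert, sdiff_insert_of_notMem notMem_range_self]

theorem Finsupp.lift_single {R M α : Type*} [Semiring R] [AddCommMonoid M] [Module R M]
    (f : α → M) (a : α) (b : R) : Finsupp.lift M R α f (Finsupp.single a b) = b • f a := by
  simp only [Finsupp.lift_apply, zero_smul, Finsupp.sum_single_index]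

theorem neg_one_pow_mul_self {M : Type*} [Monoid M] [HasDistribNeg M] (n : ℕ) :
    (-1 : M) ^ n * (-1) ^ n = 1 := by
  rw [← pow_add, ← two_mul, pow_mul, neg_one_sq, one_pow]

/-- `DegAdmissible ν k`: `s_ν` is defined on `k`-simplices. Its `r`-th degeneracy `s_a` acts on
`(k + r - 1)`-simplices, so it needs `a + 1 - r ≤ k`, and `a + 1 - r = #(range (a + 1) \ ν)`. -/
def DegAdmissible (ν : Finset ℕ) (k : ℕ) : Prop := ∀ a ∈ ν, #(range (a + 1) \ ν) ≤ k

theorem DegAdmissible.of_insert {ν : Finset ℕ} {a k : ℕ} (h : ∀ b ∈ ν, b < a)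
    (hadm : DegAdmissible (insert a ν) k) : DegAdmissible ν k ∧ a ≤ k + #ν := by
  constructor
  · intro b hb
    have ha : a ∉ range (b + 1) := fun ha => (h b hb).not_ge (Nat.lt_succ_iff.1 (mem_range.1 ha))
    rw [← sdiff_insert_of_notMem ha]
    exact hadm b (mem_insert_of_mem hb)
  · have hcard : #(range (a + 1) \ insert a ν) = a - #ν := by
      rw [range_add_one_sdiff_insert, card_sdiff_of_subset fun b hb => mem_range.2 (h b hb),
        card_range]
    have := hadm a (mem_insert_self a ν)
    omega

theorem DegAdmissible.of_subset_range {ν : Finset ℕ} {N k : ℕ} (hν : ν ⊆ range N)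
    (hk : #(range N \ ν) ≤ k) : DegAdmissible ν k := fun _ ha =>
  (card_le_card (sdiff_subset_sdiff (range_subset_range.2 (mem_range.1 (hν ha))) le_rfl)).trans hk

namespace SST

variable (S : SST)

/- `sT`, `sSetT` and `ConeData.StT` are `s`, `sSet` and `St` on `Tot`: carrying the degree along
removes the casts between the `X n`. -/

def sT (i : ℕ) (t : S.Tot) : S.Tot := ⟨t.1 + 1, S.s i t.2⟩

def sSetT (ν : Finset ℕ) (t : S.Tot) : S.Tot := ⟨t.1 + #ν, S.sSet ν t.2⟩

theorem mk_castX {a b : ℕ} (h : a = b) (x : S.X a) : (⟨b, S.castX h x⟩ : S.Tot) = ⟨a, x⟩ := by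
  cases h; rfl

theorem sSetT_eq_sIter (ν : Finset ℕ) (t : S.Tot) :
    S.sSetT ν t = ⟨_, S.sIter ((ν.sort (· ≤ ·)).reverse) t.2⟩ :=
  S.mk_castX _ _

theorem sSetT_empty (t : S.Tot) : S.sSetT ∅ t = t := by
  rw [sSetT_eq_sIter, sort_empty]; rfl

theorem sSetT_insert {a : ℕ} {ν : Finset ℕ} (h : ∀ b ∈ ν, b < a) (t : S.Tot) :
    S.sSetT (insert a ν) t = S.sT a (S.sSetT ν t) := by
  rw [sSetT_eq_sIter, sSetT_eq_sIter, sort_insert_of_forall_lt h, List.reverse_append]; rfl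

end SST

namespace ConeData

variable {E : SST} (CE : ConeData E)

def StT (t : E.Tot) : E.Tot := ⟨t.1 + 1, CE.St t.2⟩

theorem sT_StT_of_le {i : ℕ} {t : E.Tot} (h : i ≤ t.1) :
    E.sT i (CE.StT t) = CE.StT (E.sT i t) :=
  congrArg (Sigma.mk _) (CE.hs_mid i h t.2)

theorem sT_StT_top (t : E.Tot) : E.sT (t.1 + 1) (CE.StT t) = CE.StT (CE.StT t) :=
  congrArg (Sigma.mk _) (CE.hs_top t.2)

theorem sSetT_StT {ν : Finset ℕ} {t : E.Tot} (h : DegAdmissible ν t.1) :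
    E.sSetT ν (CE.StT t) = CE.StT (E.sSetT ν t) := by
  induction ν using Finset.induction_on_max with
  | empty => rw [E.sSetT_empty, E.sSetT_empty]
  | insert a ν hlt ih =>
    obtain ⟨hν, ha⟩ := h.of_insert hlt
    rw [E.sSetT_insert hlt, E.sSetT_insert hlt, ih hν, CE.sT_StT_of_le ha]

theorem exists_sSetT_StT {ν : Finset ℕ} {t : E.Tot} (h : DegAdmissible ν (t.1 + 1)) :
    ∃ w, E.sSetT ν (CE.StT t) = CE.StT w := by
  induction ν using Finset.induction_on_max with
  | empty => exact ⟨t, E.sSetT_empty _⟩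
  | insert a ν hlt ih =>
    obtain ⟨hν, ha⟩ := h.of_insert hlt
    obtain ⟨w, hw⟩ := ih hν
    have hdeg : t.1 + 1 + #ν = w.1 + 1 := congrArg Sigma.fst hw
    rw [E.sSetT_insert hlt, hw]
    rcases (ha.trans_eq hdeg).lt_or_eq with ha | rfl
    · exact ⟨E.sT a w, CE.sT_StT_of_le (Nat.lt_succ_iff.1 ha)⟩
    · exact ⟨CE.StT w, CE.sT_StT_top w⟩

theorem sSetT_insert_StT {ν : Finset ℕ} {N : ℕ} {t : E.Tot} (hν : ν ⊆ range N)
    (hcard : #(range N \ ν) = t.1 + 1) :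
    E.sSetT (insert N ν) (CE.StT t) = CE.StT (E.sSetT ν (CE.StT t)) := by
  obtain ⟨w, hw⟩ := CE.exists_sSetT_StT (DegAdmissible.of_subset_range hν hcard.le)
  obtain rfl : N = w.1 + 1 := by
    have hw1 : t.1 + 1 + #ν = w.1 + 1 := congrArg Sigma.fst hw
    have hνN : #ν ≤ N := card_range N ▸ card_le_card hν
    rw [card_sdiff_of_subset hν, card_range] at hcard
    omega
  rw [E.sSetT_insert fun b hb => mem_range.1 (hν hb), hw, CE.sT_StT_top]

end ConeData

theorem shSign_range_add_one_sdiff {N : ℕ} {ν : Finset ℕ} (hν : ν ⊆ range N) :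
    shSign (range (N + 1) \ ν) ν = (-1) ^ #ν * shSign (range N \ ν) ν := by
  rw [shSign, shSign, range_add_one_sdiff hν, sum_insert (by simp),
    filter_true_of_mem fun b hb => mem_range.1 (hν hb), pow_add]

theorem shSign_insert_top (N : ℕ) (ν : Finset ℕ) :
    shSign (range N \ ν) (insert N ν) = shSign (range N \ ν) ν := by
  unfold shSign
  refine congrArg _ (sum_congr rfl fun a ha => ?_)
  rw [filter_insert, if_neg (mem_range.1 (mem_sdiff.1 ha).1).not_gt]

section Chains

variable {S T : SST}

/-- The simplex `(u, v)` of `S × T` as a chain; it is `0` when the degrees of `u` and `v`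
differ. -/
def crossGen (u : S.Tot) (v : T.Tot) : Ch R (S.prod T) :=
  if h : u.1 = v.1 then Finsupp.single ⟨v.1, (S.castX h u.2, v.2)⟩ 1 else 0

theorem crossGen_eq_single {d : ℕ} (u : S.Tot) (v : T.Tot) (hu : u.1 = d) (hv : v.1 = d) :
    crossGen R u v = Finsupp.single ⟨d, (S.castX hu u.2, T.castX hv v.2)⟩ 1 := by
  obtain ⟨a, u⟩ := u
  obtain ⟨b, v⟩ := v
  dsimp only at hu hv
  subst hu hv
  exact dif_pos rfl

theorem shufAux_eq_sum (p : S.Tot) (q : T.Tot) :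
    shufAux R S T p q = ∑ ν ∈ powersetCard q.1 (range (p.1 + q.1)),
      (shSign (range (p.1 + q.1) \ ν) ν : R) •
        crossGen R (S.sSetT ν p) (T.sSetT (range (p.1 + q.1) \ ν) q) := by
  rw [powersetCard_eq_filter, sum_filter]
  refine sum_congr rfl fun ν hν => ?_
  by_cases hc : #ν = q.1
  · have hν : ν ⊆ range (p.1 + q.1) := mem_powerset.1 hν
    rw [dif_pos ⟨hν, hc⟩, if_pos hc, crossGen_eq_single R (d := p.1 + q.1) _ _
      (by simp [SST.sSetT, hc]) (by simp [SST.sSetT, card_sdiff_of_subset hν, hc]; omega)]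
    rfl
  · rw [dif_neg fun h => hc h.2, if_neg hc]

theorem shufT_single (p : S.Tot) (q : T.Tot) :
    shufT R S T (Finsupp.single p 1 ⊗ₜ Finsupp.single q 1) = shufAux R S T p q := by
  rw [shufT, lift.tmul, shuf, Finsupp.lift_single, one_smul, Finsupp.lift_single, one_smul]

theorem parOp_single (t : S.Tot) :
    parOp R S (Finsupp.single t 1) = (-1 : R) ^ t.1 • Finsupp.single t 1 :=
  (Finsupp.lift_single _ t (1 : R)).trans (one_smul R _)

theorem Sop_single (CS : ConeData S) (t : S.Tot) :
    Sop R S CS (Finsupp.single t 1) = (-(-1 : R) ^ t.1) • Finsupp.single (CS.StT t) 1 :=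
  (Finsupp.lift_single _ t (1 : R)).trans (one_smul R _)

theorem ConeData.prod_crossGen (CS : ConeData S) (CT : ConeData T) (u : S.Tot) (v : T.Tot) :
    ConeData.prod R CS CT (crossGen R u v)
      = (-(-1 : R) ^ u.1) • crossGen R (CS.StT u) (CT.StT v) := by
  obtain ⟨a, u⟩ := u
  obtain ⟨b, v⟩ := v
  by_cases h : a = b
  · subst h
    rw [crossGen_eq_single R (d := a) _ _ rfl rfl, crossGen_eq_single R (d := a + 1) _ _ rfl rfl,
      ConeData.prod, Finsupp.lift_single, one_smul]
    rfl
  · simp [crossGen, ConeData.StT, h]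

end Chains

section Generators

variable {E F : SST} (CE : ConeData E) (CF : ConeData F)

theorem crossGen_sSetT_StT_of_top_notMem {p : E.Tot} {q : F.Tot} {N : ℕ} {ν : Finset ℕ}
    (hN : N = p.1 + q.1 + 1) (hν : ν ⊆ range N) (hc : #ν = q.1 + 1) :
    crossGen R (E.sSetT ν (CE.StT p)) (F.sSetT (range (N + 1) \ ν) (CF.StT q))
      = crossGen R (CE.StT (E.sSetT ν p)) (CF.StT (F.sSetT (range N \ ν) (CF.StT q))) := by
  have hp : #(range N \ ν) = p.1 := by
    rw [card_sdiff_of_subset hν, card_range, hc]; omega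
  congr 1
  · exact CE.sSetT_StT (DegAdmissible.of_subset_range hν hp.le)
  · rw [range_add_one_sdiff hν]
    exact CF.sSetT_insert_StT sdiff_subset (by rw [Finset.sdiff_sdiff_eq_self hν, hc])

theorem crossGen_sSetT_StT_of_top_mem {p : E.Tot} {q : F.Tot} {N : ℕ} {ν : Finset ℕ}
    (hN : N = p.1 + q.1 + 1) (hν : ν ⊆ range N) (hc : #ν = q.1) :
    crossGen R (E.sSetT (insert N ν) (CE.StT p)) (F.sSetT (range (N + 1) \ insert N ν) (CF.StT q))
      = crossGen R (CE.StT (E.sSetT ν (CE.StT p))) (CF.StT (F.sSetT (range N \ ν) q)) := by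
  have hp : #(range N \ ν) = p.1 + 1 := by
    rw [card_sdiff_of_subset hν, card_range, hc]; omega
  congr 1
  · exact CE.sSetT_insert_StT hν hp
  · rw [range_add_one_sdiff_insert]
    exact CF.sSetT_StT (DegAdmissible.of_subset_range sdiff_subset
      (by rw [Finset.sdiff_sdiff_eq_self hν, hc]))

theorem shufAux_StT_StT (p : E.Tot) (q : F.Tot) :
    (-1 : R) ^ q.1 • shufAux R E F (CE.StT p) (CF.StT q)
      = (-1 : R) ^ (p.1 + q.1 + 1) • ConeData.prod R CE CF (shufAux R E F p (CF.StT q))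
        - (-1 : R) ^ (p.1 + 1) • ConeData.prod R CE CF (shufAux R E F (CE.StT p) q) := by
  set N := p.1 + q.1 + 1 with hN
  rw [shufAux_eq_sum, shufAux_eq_sum, shufAux_eq_sum,
    show (CE.StT p).1 + (CF.StT q).1 = N + 1 by simp only [ConeData.StT]; omega,
    show p.1 + (CF.StT q).1 = N by simp only [ConeData.StT]; omega,
    show (CE.StT p).1 + q.1 = N by simp only [ConeData.StT]; omega,
    show (CF.StT q).1 = q.1 + 1 from rfl]
  nth_rw 1 [range_add_one]
  rw [sum_powersetCard_succ_insert notMem_range_self, smul_add, smul_sum, smul_sum, map_sum,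
    map_sum, smul_sum, smul_sum, sub_eq_add_neg, ← sum_neg_distrib]
  congr 1 <;> refine sum_congr rfl fun ν hν => ?_ <;> obtain ⟨hνN, hc⟩ := mem_powersetCard.1 hν
  · rw [crossGen_sSetT_StT_of_top_notMem R CE CF hN hνN hc, shSign_range_add_one_sdiff hνN,
      map_smul, ConeData.prod_crossGen, smul_smul, smul_smul, smul_smul]
    congr 1
    rw [show (E.sSetT ν p).1 = N by simp only [SST.sSetT, hc]; omega, hc, pow_succ]
    push_cast
    linear_combination (-(shSign (range N \ ν) ν : R)) * neg_one_pow_mul_self (M := R) q.1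
      + (shSign (range N \ ν) ν : R) * neg_one_pow_mul_self (M := R) N
  · rw [crossGen_sSetT_StT_of_top_mem R CE CF hN hνN hc, range_add_one_sdiff_insert,
      shSign_insert_top, map_smul, ConeData.prod_crossGen, smul_smul, smul_smul, smul_smul,
      ← neg_smul]
    congr 1
    rw [show (E.sSetT ν (CE.StT p)).1 = p.1 + 1 + q.1 by simp only [SST.sSetT, ConeData.StT, hc],
      pow_add]
    linear_combination (-((-1) ^ q.1 * (shSign (range N \ ν) ν : R))) *
      neg_one_pow_mul_self (M := R) (p.1 + 1)

end Generators

/-- `∇ (S_G ⊗ S_H) = S_{G×H} ∇ (1 ⊗ S_H - S_G ⊗ 1)` on normalised chains. -/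
theorem shuffle_cone_operator_identity (E F : SST)
    (CE : ConeData E) (CF : ConeData F) :
    ∀ z : Ch R E ⊗[R] Ch R F,
      shufT R E F (map (Sop R E CE) (Sop R F CF)
          (map (parOp R E) (LinearMap.id (M := Ch R F)) z))
        - ConeData.prod R CE CF (shufT R E F
            (map (LinearMap.id (M := Ch R E)) (Sop R F CF)
              (map (parOp R E) (LinearMap.id (M := Ch R F)) z)))
        + ConeData.prod R CE CF (shufT R E F
            (map (Sop R E CE) (LinearMap.id (M := Ch R F)) z))
        ∈ DegSub R (E.prod F) := by
  suffices h : shufT R E F ∘ₗ map (Sop R E CE) (Sop R F CF) ∘ₗ map (parOp R E) LinearMap.id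
      - ConeData.prod R CE CF ∘ₗ shufT R E F ∘ₗ map LinearMap.id (Sop R F CF)
          ∘ₗ map (parOp R E) LinearMap.id
      + ConeData.prod R CE CF ∘ₗ shufT R E F ∘ₗ map (Sop R E CE) LinearMap.id = 0 by
    intro z
    have hz := congr($h z)
    simp only [LinearMap.add_apply, LinearMap.sub_apply, LinearMap.comp_apply,
      LinearMap.zero_apply] at hz
    exact hz ▸ (DegSub R (E.prod F)).zero_mem
  refine TensorProduct.ext (Finsupp.lhom_ext' fun p => LinearMap.ext_ring
    (Finsupp.lhom_ext' fun q => LinearMap.ext_ring ?_))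
  simp only [LinearMap.compr₂ₛₗ_apply, LinearMap.comp_apply, mk_apply, Finsupp.lsingle_apply,
    LinearMap.add_apply, LinearMap.sub_apply, LinearMap.zero_apply, map_tmul, LinearMap.id_apply,
    parOp_single, Sop_single, ← smul_tmul', tmul_smul, map_smul, shufT_single]
  linear_combination (norm := module) shufAux_StT_StT R CE CF p q
    + ((-1 : R) ^ q.1 * neg_one_pow_mul_self (M := R) p.1) • shufAux R E F (CE.StT p) (CF.StT q)

end
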